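/- Let (K, ν, μ, κ) be a comonad on a doctrine P : Cᵒᵖ ⥤ PartOrd and let (A, a : A ⟶ K A) be a coalgebra for K. Then the operator α ↦ P(a)(κ_A α) on P(A) is idempotent: for every α ∈ P(A), P(a)(κ_A(P(a)(κ_A α))) = P(a)(κ_A α). Consequently, α ≤ P(a)(κ_A α) holds if and only if P(a)(κ_A α) = α, i.e. the elements below their image are exactly the fixed points of the operator. -/

import Mathlib

/-
Write `T = P(a) ∘ κ_A`. The counit law of `κ` together with `a ≫ ν_A = 𝟙` makes `T` deflationary.
The comultiplication law of `κ`, the coassociativity `a ≫ μ_A = a ≫ K(a)` and the naturality of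
`κ` at `a` give `T α ≤ T (T α)`. A deflationary operator with `T ≤ T ∘ T` is idempotent, and its
fixed points are exactly the `α` with `α ≤ T α`.
-/

open CategoryTheory Opposite

/-- Apply a morphism of `PartOrd` to an element (morphisms of `PartOrd` are order homs). -/
def ap {X Y : PartOrd} (f : X ⟶ Y) : X →o Y := f.hom

section Doctrine

variable {C : Type*} [Category C]

lemma ap_map_op_comp (P : Cᵒᵖ ⥤ PartOrd) {X Y Z : C} (f : X ⟶ Y) (g : Y ⟶ Z)
    (α : P.obj (op Z)) :
    ap (P.map (f ≫ g).op) α = ap (P.map f.op) (ap (P.map g.op) α) := by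
  rw [op_comp, P.map_comp]
  rfl

lemma ap_map_op_id (P : Cᵒᵖ ⥤ PartOrd) (X : C) (α : P.obj (op X)) :
    ap (P.map (𝟙 X).op) α = α := by
  rw [op_id, P.map_id]
  rfl

lemma ap_app_map {D : Type*} [Category D] {P Q : D ⥤ PartOrd} (kap : P ⟶ Q) {X Y : D}
    (f : X ⟶ Y) (α : P.obj X) :
    ap (kap.app Y) (ap (P.map f) α) = ap (Q.map f) (ap (kap.app X) α) := by
  change ap (P.map f ≫ kap.app Y) α = ap (kap.app X ≫ Q.map f) α
  rw [kap.naturality]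

variable {P : Cᵒᵖ ⥤ PartOrd} {K : Comonad C}

def coalgebraOperator (kap : P ⟶ (K : C ⥤ C).op ⋙ P) (A : K.Coalgebra) :
    P.obj (op A.A) →o P.obj (op A.A) :=
  (ap (P.map A.a.op)).comp (ap (kap.app (op A.A)))

lemma coalgebraOperator_apply (kap : P ⟶ (K : C ⥤ C).op ⋙ P) (A : K.Coalgebra)
    (α : P.obj (op A.A)) :
    coalgebraOperator kap A α = ap (P.map A.a.op) (ap (kap.app (op A.A)) α) :=
  rfl

lemma coalgebraOperator_le (kap : P ⟶ (K : C ⥤ C).op ⋙ P) (A : K.Coalgebra)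
    (hcounit : ∀ α : P.obj (op A.A),
      ap (kap.app (op A.A)) α ≤ ap (P.map (K.ε.app A.A).op) α)
    (α : P.obj (op A.A)) :
    coalgebraOperator kap A α ≤ α :=
  calc coalgebraOperator kap A α
      ≤ ap (P.map A.a.op) (ap (P.map (K.ε.app A.A).op) α) := (ap _).monotone (hcounit α)
    _ = α := by rw [← ap_map_op_comp, A.counit, ap_map_op_id]

lemma le_coalgebraOperator_coalgebraOperator (kap : P ⟶ (K : C ⥤ C).op ⋙ P)
    (A : K.Coalgebra)
    (hcomult : ∀ α : P.obj (op A.A),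
      ap (kap.app (op A.A)) α ≤
        ap (P.map (K.δ.app A.A).op)
          (ap (kap.app (op ((K : C ⥤ C).obj A.A))) (ap (kap.app (op A.A)) α)))
    (α : P.obj (op A.A)) :
    coalgebraOperator kap A α ≤ coalgebraOperator kap A (coalgebraOperator kap A α) :=
  calc coalgebraOperator kap A α
      ≤ ap (P.map A.a.op) (ap (P.map (K.δ.app A.A).op)
          (ap (kap.app (op ((K : C ⥤ C).obj A.A))) (ap (kap.app (op A.A)) α))) :=
        (ap _).monotone (hcomult α)
    _ = ap (P.map A.a.op) (ap (P.map ((K : C ⥤ C).map A.a).op)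
          (ap (kap.app (op ((K : C ⥤ C).obj A.A))) (ap (kap.app (op A.A)) α))) := by
        rw [← ap_map_op_comp, A.coassoc, ap_map_op_comp]
    _ = coalgebraOperator kap A (coalgebraOperator kap A α) := by
        rw [coalgebraOperator_apply, coalgebraOperator_apply, ap_app_map]
        rfl

end Doctrine

/-- Given a comonad `(K, ν, μ, κ)` on a doctrine `P` and a coalgebra `(A, a)`, the operator
`α ↦ P(a)(κ_A α)` on the fibre `P(A)` is idempotent; consequently `α ≤ P(a)(κ_A α)` holds
iff `α` is a fixed point of the operator. -/
theorem comonad_on_doctrine_operator_idempotent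
    {C : Type*} [Category C] (P : Cᵒᵖ ⥤ PartOrd) (K : Comonad C)
    (kap : P ⟶ (K : C ⥤ C).op ⋙ P)
    (hcounit : ∀ (X : C) (α : P.obj (op X)),
      ap (kap.app (op X)) α ≤ ap (P.map (K.ε.app X).op) α)
    (hcomult : ∀ (X : C) (α : P.obj (op X)),
      ap (kap.app (op X)) α ≤
        ap (P.map (K.δ.app X).op)
          (ap (kap.app (op ((K : C ⥤ C).obj X))) (ap (kap.app (op X)) α)))
    (A : K.Coalgebra) :
    ∀ (α : P.obj (op A.A)),
      ap (P.map A.a.op) (ap (kap.app (op A.A))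
          (ap (P.map A.a.op) (ap (kap.app (op A.A)) α)))
        = ap (P.map A.a.op) (ap (kap.app (op A.A)) α) ∧
      (α ≤ ap (P.map A.a.op) (ap (kap.app (op A.A)) α) ↔
        ap (P.map A.a.op) (ap (kap.app (op A.A)) α) = α) := by
  intro α
  have defl := coalgebraOperator_le kap A (hcounit A.A)
  have infl := le_coalgebraOperator_coalgebraOperator kap A (hcomult A.A)
  exact ⟨(defl _).antisymm (infl α), fun h => (defl α).antisymm h, fun h => h.ge⟩
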